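/- arXiv:1701.07796 — 9 statements merged into one kernel-verified Lean document; each statement's English description precedes it below -/
import Mathlib

section
/- Elementary variational formula for exponential integrals (finite case): for a probability mass function μ on a finite set S and any function g : S → ℝ, log ∑_x e^{g(x)} μ(x) equals the supremum over all probability mass functions θ on S of (∑_x g(x) θ(x) − D(θ‖μ)), where D(θ‖μ) = ∑_{x : θ(x)>0} θ(x) log(θ(x)/μ(x)) if θ is absolutely continuous with respect to μ and +∞ otherwise. -/
open Finset Real
open Classical

/-!
With `ν = e^g μ / Z` the tilted distribution, every `θ ≪ μ` satisfies the exact identity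
`∑ g θ - D(θ‖μ) = log Z - D(θ‖ν)`, obtained by splitting `log (θ/μ) = log (θ/ν) + g - log Z`.
Gibbs' inequality `D(θ‖ν) ≥ 0`, i.e. `a log (a/b) ≥ a - b` summed, bounds the supremum by `log Z`,
and `θ = ν` attains it; a `θ` that is not absolutely continuous contributes `-∞`.
-/

lemma sub_le_mul_log_div {a b : ℝ} (ha : 0 ≤ a) (hb : 0 ≤ b) (hab : b = 0 → a = 0) :
    a - b ≤ a * log (a / b) := by
  rcases hb.eq_or_lt with rfl | hb
  · simp [hab rfl]
  calc a - b = b * (a / b - 1) := by field_simp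
    _ ≤ b * (a / b * log (a / b)) := by gcongr; exact self_sub_one_le_mul_log (by positivity)
    _ = a * log (a / b) := by field_simp

theorem sum_mul_log_div_nonneg {ι : Type*} {s : Finset ι} {p q : ι → ℝ}
    (hp : ∀ i ∈ s, 0 ≤ p i) (hq : ∀ i ∈ s, 0 ≤ q i) (hpq : ∀ i ∈ s, q i = 0 → p i = 0)
    (hsum : ∑ i ∈ s, q i ≤ ∑ i ∈ s, p i) :
    0 ≤ ∑ i ∈ s, p i * log (p i / q i) :=
  calc 0 ≤ ∑ i ∈ s, (p i - q i) := by rw [sum_sub_distrib]; linarith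
    _ ≤ _ := sum_le_sum fun i hi => sub_le_mul_log_div (hp i hi) (hq i hi) (hpq i hi)

section Tilted

variable {S : Type*} [Fintype S] (μ g : S → ℝ)

noncomputable def tilted (x : S) : ℝ := exp (g x) * μ x / ∑ y, exp (g y) * μ y

variable {μ}

lemma sum_exp_mul_pos (hμ : ∀ x, 0 ≤ μ x) (hpos : 0 < ∑ x, μ x) :
    0 < ∑ x, exp (g x) * μ x := by
  obtain ⟨x, -, hx⟩ := exists_lt_of_sum_lt (by simpa using hpos : ∑ _x : S, (0 : ℝ) < ∑ x, μ x)
  exact sum_pos' (fun y _ => by have := hμ y; positivity) ⟨x, mem_univ x, by positivity⟩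

lemma tilted_nonneg (hμ : ∀ x, 0 ≤ μ x) (x : S) : 0 ≤ tilted μ g x :=
  div_nonneg (mul_nonneg (exp_pos _).le (hμ x))
    (sum_nonneg fun y _ => mul_nonneg (exp_pos _).le (hμ y))

lemma tilted_eq_zero_iff (hZ : 0 < ∑ x, exp (g x) * μ x) {x : S} :
    tilted μ g x = 0 ↔ μ x = 0 := by
  simp [tilted, hZ.ne', exp_ne_zero]

lemma sum_tilted (hZ : 0 < ∑ x, exp (g x) * μ x) : ∑ x, tilted μ g x = 1 := by
  simp only [tilted, ← sum_div, div_self hZ.ne']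

lemma mul_log_div_eq_mul_log_div_tilted (hZ : 0 < ∑ x, exp (g x) * μ x) {θ : S → ℝ} {x : S}
    (hθ : μ x = 0 → θ x = 0) :
    θ x * log (θ x / μ x) =
      θ x * log (θ x / tilted μ g x) + (g x - log (∑ y, exp (g y) * μ y)) * θ x := by
  rcases eq_or_ne (θ x) 0 with h | hθx
  · simp [h]
  have hμx : μ x ≠ 0 := mt hθ hθx
  have : θ x / μ x = θ x / tilted μ g x * (exp (g x) / ∑ y, exp (g y) * μ y) := by
    simp only [tilted]; field_simp
  rw [this, log_mul (by simp [tilted, hθx, hμx, hZ.ne']) (by positivity),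
    log_div (exp_pos _).ne' hZ.ne', log_exp]
  ring

theorem sum_mul_sub_sum_mul_log_div_eq (hZ : 0 < ∑ x, exp (g x) * μ x) {θ : S → ℝ}
    (hθ1 : ∑ x, θ x = 1) (hθ : ∀ x, μ x = 0 → θ x = 0) :
    ∑ x, g x * θ x - ∑ x, θ x * log (θ x / μ x) =
      log (∑ x, exp (g x) * μ x) - ∑ x, θ x * log (θ x / tilted μ g x) := by
  simp only [mul_log_div_eq_mul_log_div_tilted g hZ (hθ _), sum_add_distrib, sub_mul,
    sum_sub_distrib, ← mul_sum, hθ1]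
  ring

theorem sum_mul_sub_sum_mul_log_div_le_log (hμ : ∀ x, 0 ≤ μ x) (hZ : 0 < ∑ x, exp (g x) * μ x)
    {θ : S → ℝ} (hθ0 : ∀ x, 0 ≤ θ x) (hθ1 : ∑ x, θ x = 1) (hθ : ∀ x, μ x = 0 → θ x = 0) :
    ∑ x, g x * θ x - ∑ x, θ x * log (θ x / μ x) ≤ log (∑ x, exp (g x) * μ x) := by
  rw [sum_mul_sub_sum_mul_log_div_eq g hZ hθ1 hθ, sub_le_self_iff]
  exact sum_mul_log_div_nonneg (fun x _ => hθ0 x) (fun x _ => tilted_nonneg g hμ x)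
    (fun x _ h => hθ x ((tilted_eq_zero_iff g hZ).1 h)) (by rw [sum_tilted g hZ, hθ1])

theorem sum_mul_sub_sum_mul_log_div_tilted (hZ : 0 < ∑ x, exp (g x) * μ x) :
    ∑ x, g x * tilted μ g x - ∑ x, tilted μ g x * log (tilted μ g x / μ x) =
      log (∑ x, exp (g x) * μ x) := by
  rw [sum_mul_sub_sum_mul_log_div_eq g hZ (sum_tilted g hZ) fun x => (tilted_eq_zero_iff g hZ).2]
  simp

end Tilted

lemma sum_filter_pos_mul_log_div {ι : Type*} {s : Finset ι} {p q : ι → ℝ}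
    (hp : ∀ i ∈ s, 0 ≤ p i) :
    ∑ i ∈ s with 0 < p i, p i * log (p i / q i) = ∑ i ∈ s, p i * log (p i / q i) :=
  sum_filter_of_ne fun i hi h => (hp i hi).lt_of_ne' (left_ne_zero_of_mul h)

theorem log_exp_integral_eq_iSup_general {S : Type} [Fintype S]
    (μ : S → ℝ) (g : S → ℝ)
    (hμ0 : ∀ x, 0 ≤ μ x) (hμ1 : ∑ x, μ x = 1) :
    (Real.log (∑ x, Real.exp (g x) * μ x) : EReal) =
      ⨆ θ : {θ : S → ℝ // (∀ x, 0 ≤ θ x) ∧ ∑ x, θ x = 1},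
        ((∑ x, g x * θ.1 x : ℝ) : EReal) -
          (if ∀ x, μ x = 0 → θ.1 x = 0 then
            ((∑ x ∈ Finset.univ.filter (fun x => 0 < θ.1 x),
                θ.1 x * Real.log (θ.1 x / μ x) : ℝ) : EReal)
          else ⊤) := by
  have hZ := sum_exp_mul_pos g hμ0 (hμ1 ▸ one_pos)
  refine le_antisymm ?_ (iSup_le fun ⟨θ, hθ0, hθ1⟩ => ?_)
  · refine le_iSup_of_le ⟨tilted μ g, tilted_nonneg g hμ0, sum_tilted g hZ⟩ ?_
    rw [if_pos fun x => (tilted_eq_zero_iff g hZ).2,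
      sum_filter_pos_mul_log_div fun x _ => tilted_nonneg g hμ0 x, ← EReal.coe_sub,
      sum_mul_sub_sum_mul_log_div_tilted g hZ]
  · split_ifs with hθ
    · rw [sum_filter_pos_mul_log_div fun x _ => hθ0 x, ← EReal.coe_sub, EReal.coe_le_coe_iff]
      exact sum_mul_sub_sum_mul_log_div_le_log g hμ0 hZ hθ0 hθ1 hθ
    · simp

/-- Elementary variational formula for exponential integrals (finite case):
log ∑_x e^{g(x)} μ(x) = sup over pmfs θ of (∑_x g(x)θ(x) - D(θ‖μ)),
where D(θ‖μ) = +∞ when θ is not absolutely continuous w.r.t. μ. -/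
theorem log_exp_integral_eq_iSup {S : Type} [Fintype S] [Nonempty S]
    (μ : S → ℝ) (g : S → ℝ)
    (hμ0 : ∀ x, 0 ≤ μ x) (hμ1 : ∑ x, μ x = 1) :
    (Real.log (∑ x, Real.exp (g x) * μ x) : EReal) =
      ⨆ θ : {θ : S → ℝ // (∀ x, 0 ≤ θ x) ∧ ∑ x, θ x = 1},
        ((∑ x, g x * θ.1 x : ℝ) : EReal) -
          (if ∀ x, μ x = 0 → θ.1 x = 0 then
            ((∑ x ∈ Finset.univ.filter (fun x => 0 < θ.1 x),
                θ.1 x * Real.log (θ.1 x / μ x) : ℝ) : EReal)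
          else ⊤) :=
  log_exp_integral_eq_iSup_general μ g hμ0 hμ1
end

section
/- For α > 1 and probability mass functions ν, θ, μ on a finite set S with ν ⪯ θ and μ ⪯ ν, the Rényi divergence satisfies R_α(ν‖θ) ≥ (1/α) D(μ‖θ) − (1/(α−1)) D(μ‖ν), where R_α(ν‖θ) = (1/(α(α−1))) log ∑_{x : ν(x)θ(x)>0} ν(x)^α θ(x)^{1−α}. -/
open Finset Real
open Classical

/-- For α > 1 and pmfs ν, θ, μ with ν ⪯ θ and μ ⪯ ν,
R_α(ν‖θ) ≥ (1/α) D(μ‖θ) - (1/(α-1)) D(μ‖ν). -/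
theorem renyi_ge_relent_combination {S : Type} [Fintype S]
    (ν θ μ : S → ℝ) (α : ℝ) (hα : 1 < α)
    (hν0 : ∀ x, 0 ≤ ν x) (hν1 : ∑ x, ν x = 1)
    (hθ0 : ∀ x, 0 ≤ θ x) (hθ1 : ∑ x, θ x = 1)
    (hμ0 : ∀ x, 0 ≤ μ x) (hμ1 : ∑ x, μ x = 1)
    (hνθ : ∀ x, θ x = 0 → ν x = 0)
    (hμν : ∀ x, ν x = 0 → μ x = 0) :
    (1 / (α * (α - 1))) *
        Real.log (∑ x ∈ Finset.univ.filter (fun x => 0 < ν x * θ x),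
          ν x ^ α * θ x ^ (1 - α)) ≥
      (1 / α) * (∑ x ∈ Finset.univ.filter (fun x => 0 < μ x),
          μ x * Real.log (μ x / θ x)) -
        (1 / (α - 1)) * (∑ x ∈ Finset.univ.filter (fun x => 0 < μ x),
          μ x * Real.log (μ x / ν x)) := by
  have hα0 : (0:ℝ) < α := by linarith
  have hα1 : (0:ℝ) < α - 1 := by linarith
  set f : S → ℝ := fun x => ν x ^ α * θ x ^ (1 - α) with hf
  set T : Finset S := Finset.univ.filter (fun x => 0 < μ x) with hT
  set U : Finset S := Finset.univ.filter (fun x => 0 < ν x * θ x) with hU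
  set Z : ℝ := ∑ x ∈ U, f x with hZ
  -- basic positivity facts on T
  have hTpos : ∀ x ∈ T, 0 < μ x ∧ 0 < ν x ∧ 0 < θ x := by
    intro x hx
    have hμx : 0 < μ x := (Finset.mem_filter.mp hx).2
    have hνx : 0 < ν x := by
      rcases lt_or_eq_of_le (hν0 x) with h | h
      · exact h
      · exact absurd (hμν x h.symm) (by linarith)
    have hθx : 0 < θ x := by
      rcases lt_or_eq_of_le (hθ0 x) with h | h
      · exact h
      · exact absurd (hνθ x h.symm) (by linarith)
    exact ⟨hμx, hνx, hθx⟩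
  have hTU : T ⊆ U := by
    intro x hx
    obtain ⟨_, hνx, hθx⟩ := hTpos x hx
    exact Finset.mem_filter.mpr ⟨Finset.mem_univ x, mul_pos hνx hθx⟩
  have hfpos : ∀ x ∈ U, 0 < f x := by
    intro x hx
    have h := (Finset.mem_filter.mp hx).2
    have hνx : 0 < ν x := by
      rcases lt_or_eq_of_le (hν0 x) with h' | h'
      · exact h'
      · rw [← h'] at h; simp at h
    have hθx : 0 < θ x := by
      rcases lt_or_eq_of_le (hθ0 x) with h' | h'
      · exact h'
      · rw [← h'] at h; simp at h
    exact mul_pos (Real.rpow_pos_of_pos hνx α) (Real.rpow_pos_of_pos hθx (1 - α))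
  -- Z > 0
  have hZpos : 0 < Z := by
    obtain ⟨x0, hx0⟩ : ∃ x, 0 < ν x := by
      by_contra h
      push_neg at h
      have : ∀ x, ν x = 0 := fun x => le_antisymm (h x) (hν0 x)
      simp [this] at hν1
    have hθx0 : 0 < θ x0 := by
      rcases lt_or_eq_of_le (hθ0 x0) with h | h
      · exact h
      · exact absurd (hνθ x0 h.symm) (by linarith)
    have hx0U : x0 ∈ U := Finset.mem_filter.mpr ⟨Finset.mem_univ x0, mul_pos hx0 hθx0⟩
    calc (0:ℝ) < f x0 := hfpos x0 hx0U
      _ ≤ Z := Finset.single_le_sum (fun x hx => (hfpos x hx).le) hx0U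
  -- sum of μ over T is 1
  have hμT : ∑ x ∈ T, μ x = 1 := by
    rw [← hμ1]
    apply Finset.sum_subset (Finset.subset_univ T)
    intro x _ hx
    have := Finset.mem_filter.not.mp hx
    push_neg at this
    exact le_antisymm (this (Finset.mem_univ x)) (hμ0 x)
  -- Gibbs: ∑_{T} μ log (f/μ) ≤ log Z
  have gibbs : ∑ x ∈ T, μ x * Real.log (f x / μ x) ≤ Real.log Z := by
    have step : ∑ x ∈ T, μ x * (Real.log (f x / μ x) - Real.log Z)
        ≤ ∑ x ∈ T, (f x / Z - μ x) := by
      apply Finset.sum_le_sum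
      intro x hx
      obtain ⟨hμx, _, _⟩ := hTpos x hx
      have hfx : 0 < f x := hfpos x (hTU hx)
      have hpos : 0 < f x / (μ x * Z) := div_pos hfx (mul_pos hμx hZpos)
      have hlog : Real.log (f x / (μ x * Z)) ≤ f x / (μ x * Z) - 1 :=
        Real.log_le_sub_one_of_pos hpos
      have heq : Real.log (f x / μ x) - Real.log Z = Real.log (f x / (μ x * Z)) := by
        rw [Real.log_div hfx.ne' (mul_pos hμx hZpos).ne', Real.log_div hfx.ne' hμx.ne',
          Real.log_mul hμx.ne' hZpos.ne']
        ring
      rw [heq]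
      have := mul_le_mul_of_nonneg_left hlog hμx.le
      calc μ x * Real.log (f x / (μ x * Z)) ≤ μ x * (f x / (μ x * Z) - 1) := this
        _ = f x / Z - μ x := by field_simp
    have hsum2 : ∑ x ∈ T, (f x / Z - μ x) ≤ 0 := by
      rw [Finset.sum_sub_distrib, hμT]
      have : ∑ x ∈ T, f x / Z ≤ ∑ x ∈ U, f x / Z := by
        apply Finset.sum_le_sum_of_subset_of_nonneg hTU
        intro x hx _
        exact div_nonneg (hfpos x hx).le hZpos.le
      have h1 : ∑ x ∈ U, f x / Z = 1 := by
        rw [← Finset.sum_div, ← hZ, div_self hZpos.ne']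
      linarith
    have step2 : ∑ x ∈ T, μ x * (Real.log (f x / μ x) - Real.log Z)
        = (∑ x ∈ T, μ x * Real.log (f x / μ x)) - Real.log Z := by
      rw [Finset.sum_congr rfl (fun x _ => mul_sub (μ x) _ _), Finset.sum_sub_distrib,
        ← Finset.sum_mul, hμT, one_mul]
    linarith [step, hsum2, step2.symm.le]
  -- identity: ∑_T μ log(f/μ) = (α-1) Dθ - α Dν
  have ident : ∑ x ∈ T, μ x * Real.log (f x / μ x)
      = (α - 1) * (∑ x ∈ T, μ x * Real.log (μ x / θ x))
        - α * (∑ x ∈ T, μ x * Real.log (μ x / ν x)) := by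
    rw [Finset.mul_sum, Finset.mul_sum, ← Finset.sum_sub_distrib]
    apply Finset.sum_congr rfl
    intro x hx
    obtain ⟨hμx, hνx, hθx⟩ := hTpos x hx
    have hfx : 0 < f x := hfpos x (hTU hx)
    rw [Real.log_div hfx.ne' hμx.ne', Real.log_mul (Real.rpow_pos_of_pos hνx α).ne'
      (Real.rpow_pos_of_pos hθx (1-α)).ne', Real.log_rpow hνx, Real.log_rpow hθx,
      Real.log_div hμx.ne' hθx.ne', Real.log_div hμx.ne' hνx.ne']
    ring
  -- conclude
  rw [ge_iff_le]
  have heq : (1 / α) * (∑ x ∈ T, μ x * Real.log (μ x / θ x))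
      - (1 / (α - 1)) * (∑ x ∈ T, μ x * Real.log (μ x / ν x))
      = (1 / (α * (α - 1))) * ((α - 1) * (∑ x ∈ T, μ x * Real.log (μ x / θ x))
        - α * (∑ x ∈ T, μ x * Real.log (μ x / ν x))) := by
    field_simp
  rw [heq, ← ident]
  exact mul_le_mul_of_nonneg_left (le_trans gibbs (le_refl _))
    (by positivity)
end

section
/- For 0 < α < 1 and probability mass functions ν, θ, μ on a finite set S with μ ⪯ ν and μ ⪯ θ, one has R_α(ν‖θ) ≤ (1/α) D(μ‖θ) − (1/(α−1)) D(μ‖ν). -/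
open Finset Real
open Classical

/-!
Put `T = {x | 0 < μ x}`; on `T` both `ν` and `θ` are positive. Jensen's inequality for the
concave `log` with weights `μ` gives
`∑_T μ log (ν^α θ^(1-α) / μ) ≤ log ∑_T ν^α θ^(1-α) ≤ log ∑_x ν^α θ^(1-α)`,
and the left side is `-((1-α) D(μ‖θ) + α D(μ‖ν))`. Dividing by `α (1 - α) > 0` gives the claim.
-/

theorem sum_mul_log_div_le_log_sum {ι : Type*} (s : Finset ι) (p q : ι → ℝ)
    (hp : ∀ x ∈ s, 0 < p x) (hq : ∀ x ∈ s, 0 < q x) (hp1 : ∑ x ∈ s, p x = 1) :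
    ∑ x ∈ s, p x * log (q x / p x) ≤ log (∑ x ∈ s, q x) := by
  have jensen := strictConcaveOn_log_Ioi.concaveOn.le_map_sum (t := s) (w := p)
    (p := fun x => q x / p x) (fun x hx => (hp x hx).le) hp1
    (fun x hx => div_pos (hq x hx) (hp x hx))
  have hpq : ∀ x ∈ s, p x • (q x / p x) = q x := fun x hx => mul_div_cancel₀ _ (hp x hx).ne'
  rwa [sum_congr rfl hpq] at jensen

theorem mul_log_rpow_mul_rpow_div {m n t : ℝ} (α : ℝ) (hm : 0 < m) (hn : 0 < n) (ht : 0 < t) :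
    m * log (n ^ α * t ^ (1 - α) / m) =
      -((1 - α) * (m * log (m / t)) + α * (m * log (m / n))) := by
  rw [log_div (by positivity) hm.ne', log_mul (by positivity) (by positivity),
    log_rpow hn, log_rpow ht, log_div hm.ne' ht.ne', log_div hm.ne' hn.ne']
  ring

theorem neg_log_sum_rpow_mul_rpow_le {S : Type*} [Fintype S] (ν θ μ : S → ℝ) (α : ℝ)
    (hν0 : ∀ x, 0 ≤ ν x) (hθ0 : ∀ x, 0 ≤ θ x) (hμ0 : ∀ x, 0 ≤ μ x) (hμ1 : ∑ x, μ x = 1)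
    (hμν : ∀ x, ν x = 0 → μ x = 0) (hμθ : ∀ x, θ x = 0 → μ x = 0) :
    -log (∑ x ∈ univ.filter (fun x => 0 < ν x * θ x), ν x ^ α * θ x ^ (1 - α)) ≤
      (1 - α) * ∑ x ∈ univ.filter (fun x => 0 < μ x), μ x * log (μ x / θ x) +
        α * ∑ x ∈ univ.filter (fun x => 0 < μ x), μ x * log (μ x / ν x) := by
  set T := univ.filter (fun x => 0 < μ x)
  set f := fun x => ν x ^ α * θ x ^ (1 - α)
  have hμT : ∀ x ∈ T, 0 < μ x := fun x hx => (mem_filter.1 hx).2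
  have hνT : ∀ x ∈ T, 0 < ν x := fun x hx =>
    (hν0 x).lt_of_ne fun h => (hμT x hx).ne' (hμν x h.symm)
  have hθT : ∀ x ∈ T, 0 < θ x := fun x hx =>
    (hθ0 x).lt_of_ne fun h => (hμT x hx).ne' (hμθ x h.symm)
  have hfT : ∀ x ∈ T, 0 < f x := fun x hx => by
    have := hνT x hx; have := hθT x hx; positivity
  have hμT1 : ∑ x ∈ T, μ x = 1 :=
    (sum_filter_of_ne fun x _ h => (hμ0 x).lt_of_ne' h).trans hμ1
  have hT_sub : ∑ x ∈ T, f x ≤ ∑ x ∈ univ.filter (fun x => 0 < ν x * θ x), f x :=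
    sum_le_sum_of_subset_of_nonneg
      (fun x hx => mem_filter.2 ⟨mem_univ x, mul_pos (hνT x hx) (hθT x hx)⟩)
      fun x _ _ => by have := hν0 x; have := hθ0 x; positivity
  have hTpos : 0 < ∑ x ∈ T, f x :=
    sum_pos hfT (nonempty_of_sum_ne_zero (hμT1.trans_ne one_ne_zero))
  have jensen := (sum_mul_log_div_le_log_sum T μ f hμT hfT hμT1).trans (log_le_log hTpos hT_sub)
  rw [sum_congr rfl fun x hx => mul_log_rpow_mul_rpow_div α (hμT x hx) (hνT x hx) (hθT x hx),
    sum_neg_distrib, sum_add_distrib, ← mul_sum, ← mul_sum] at jensen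
  linarith

theorem renyi_le_relent_combination_general {S : Type} [Fintype S]
    (ν θ μ : S → ℝ) (α : ℝ) (hα0 : 0 < α) (hα1 : α < 1)
    (hν0 : ∀ x, 0 ≤ ν x)
    (hθ0 : ∀ x, 0 ≤ θ x)
    (hμ0 : ∀ x, 0 ≤ μ x) (hμ1 : ∑ x, μ x = 1)
    (hμν : ∀ x, ν x = 0 → μ x = 0)
    (hμθ : ∀ x, θ x = 0 → μ x = 0) :
    (1 / (α * (α - 1))) *
        Real.log (∑ x ∈ Finset.univ.filter (fun x => 0 < ν x * θ x),
          ν x ^ α * θ x ^ (1 - α)) ≤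
      (1 / α) * (∑ x ∈ Finset.univ.filter (fun x => 0 < μ x),
          μ x * Real.log (μ x / θ x)) -
        (1 / (α - 1)) * (∑ x ∈ Finset.univ.filter (fun x => 0 < μ x),
          μ x * Real.log (μ x / ν x)) := by
  have key := neg_log_sum_rpow_mul_rpow_le ν θ μ α hν0 hθ0 hμ0 hμ1 hμν hμθ
  have hα1' : α - 1 ≠ 0 := by linarith
  have hα1'' : 1 - α ≠ 0 := by linarith
  calc _ = -log (∑ x ∈ univ.filter (fun x => 0 < ν x * θ x), ν x ^ α * θ x ^ (1 - α)) /
          (α * (1 - α)) := by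
        field_simp; ring
    _ ≤ ((1 - α) * ∑ x ∈ univ.filter (fun x => 0 < μ x), μ x * log (μ x / θ x) +
          α * ∑ x ∈ univ.filter (fun x => 0 < μ x), μ x * log (μ x / ν x)) /
          (α * (1 - α)) := by
        gcongr
    _ = _ := by field_simp; ring

/-- For 0 < α < 1 and pmfs ν, θ, μ with μ ⪯ ν and μ ⪯ θ,
R_α(ν‖θ) ≤ (1/α) D(μ‖θ) - (1/(α-1)) D(μ‖ν). -/
theorem renyi_le_relent_combination {S : Type} [Fintype S]
    (ν θ μ : S → ℝ) (α : ℝ) (hα0 : 0 < α) (hα1 : α < 1)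
    (hν0 : ∀ x, 0 ≤ ν x) (hν1 : ∑ x, ν x = 1)
    (hθ0 : ∀ x, 0 ≤ θ x) (hθ1 : ∑ x, θ x = 1)
    (hμ0 : ∀ x, 0 ≤ μ x) (hμ1 : ∑ x, μ x = 1)
    (hμν : ∀ x, ν x = 0 → μ x = 0)
    (hμθ : ∀ x, θ x = 0 → μ x = 0) :
    (1 / (α * (α - 1))) *
        Real.log (∑ x ∈ Finset.univ.filter (fun x => 0 < ν x * θ x),
          ν x ^ α * θ x ^ (1 - α)) ≤
      (1 / α) * (∑ x ∈ Finset.univ.filter (fun x => 0 < μ x),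
          μ x * Real.log (μ x / θ x)) -
        (1 / (α - 1)) * (∑ x ∈ Finset.univ.filter (fun x => 0 < μ x),
          μ x * Real.log (μ x / ν x)) :=
  renyi_le_relent_combination_general ν θ μ α hα0 hα1 hν0 hθ0 hμ0 hμ1 hμν hμθ
end

section
/- Variational characterization of Rényi divergence for 0 < α < 1 (finite case): if ν and θ are probability mass functions on a finite set S whose supports intersect, then R_α(ν‖θ) equals the infimum over probability mass functions μ with μ ⪯ ν and μ ⪯ θ of (1/α) D(μ‖θ) − (1/(α−1)) D(μ‖ν), and this infimum is attained by μ(x) = ν(x)^α θ(x)^{1−α} / Z with Z = ∑_y ν(y)^α θ(y)^{1−α}. -/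
open Finset Real
open Classical

/-- pointwise Gibbs: p - q ≤ p * log (p/q) for p,q > 0 -/
lemma gibbs_pointwise {p q : ℝ} (hp : 0 < p) (hq : 0 < q) :
    p - q ≤ p * Real.log (p / q) := by
  have h := Real.log_le_sub_one_of_pos (show (0:ℝ) < q / p from div_pos hq hp)
  have h2 : Real.log (p / q) = - Real.log (q / p) := by
    rw [← Real.log_inv, inv_div]
  have h3 : p * Real.log (q / p) ≤ p * (q / p - 1) :=
    mul_le_mul_of_nonneg_left h hp.le
  have h4 : p * (q / p - 1) = q - p := by field_simp
  nlinarith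

lemma gibbs_sum {S : Type} (s : Finset S) (p q : S → ℝ)
    (hp : ∀ x ∈ s, 0 < p x) (hq : ∀ x ∈ s, 0 < q x) :
    (∑ x ∈ s, p x) - (∑ x ∈ s, q x) ≤ ∑ x ∈ s, p x * Real.log (p x / q x) := by
  rw [← Finset.sum_sub_distrib]
  exact Finset.sum_le_sum fun x hx => gibbs_pointwise (hp x hx) (hq x hx)

/-- Variational characterization of Rényi divergence for 0 < α < 1 (finite case):
if the supports of ν and θ intersect, then R_α(ν‖θ) is the infimum over pmfs
μ ⪯ ν, μ ⪯ θ of (1/α)D(μ‖θ) - (1/(α-1))D(μ‖ν), attained at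
μ(x) = ν(x)^α θ(x)^{1-α}/Z. -/
theorem renyi_variational_small_alpha {S : Type} [Fintype S]
    (ν θ : S → ℝ) (α : ℝ) (hα0 : 0 < α) (hα1 : α < 1)
    (hν0 : ∀ x, 0 ≤ ν x) (hν1 : ∑ x, ν x = 1)
    (hθ0 : ∀ x, 0 ≤ θ x) (hθ1 : ∑ x, θ x = 1)
    (hsupp : ∃ x, 0 < ν x ∧ 0 < θ x)
    (Z : ℝ) (hZ : Z = ∑ y, ν y ^ α * θ y ^ (1 - α))
    (μ₀ : S → ℝ) (hμ₀ : ∀ x, μ₀ x = ν x ^ α * θ x ^ (1 - α) / Z) :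
    ((∀ x, 0 ≤ μ₀ x) ∧ (∑ x, μ₀ x = 1) ∧
      (∀ x, ν x = 0 → μ₀ x = 0) ∧ (∀ x, θ x = 0 → μ₀ x = 0) ∧
      (1 / (α * (α - 1))) *
          Real.log (∑ x ∈ Finset.univ.filter (fun x => 0 < ν x * θ x),
            ν x ^ α * θ x ^ (1 - α)) =
        (1 / α) * (∑ x ∈ Finset.univ.filter (fun x => 0 < μ₀ x),
            μ₀ x * Real.log (μ₀ x / θ x)) -
          (1 / (α - 1)) * (∑ x ∈ Finset.univ.filter (fun x => 0 < μ₀ x),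
            μ₀ x * Real.log (μ₀ x / ν x))) ∧
    (∀ μ : S → ℝ, (∀ x, 0 ≤ μ x) → (∑ x, μ x = 1) →
      (∀ x, ν x = 0 → μ x = 0) → (∀ x, θ x = 0 → μ x = 0) →
      (1 / (α * (α - 1))) *
          Real.log (∑ x ∈ Finset.univ.filter (fun x => 0 < ν x * θ x),
            ν x ^ α * θ x ^ (1 - α)) ≤
        (1 / α) * (∑ x ∈ Finset.univ.filter (fun x => 0 < μ x),
            μ x * Real.log (μ x / θ x)) -
          (1 / (α - 1)) * (∑ x ∈ Finset.univ.filter (fun x => 0 < μ x),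
            μ x * Real.log (μ x / ν x))) := by
  obtain ⟨x₀, hx₀ν, hx₀θ⟩ := hsupp
  have hα1' : (0:ℝ) < 1 - α := by linarith
  have hαm1 : α - 1 ≠ 0 := by intro h; linarith [hα1]
  set f : S → ℝ := fun x => ν x ^ α * θ x ^ (1 - α) with hf
  have hfnn : ∀ x, 0 ≤ f x := fun x =>
    mul_nonneg (Real.rpow_nonneg (hν0 x) _) (Real.rpow_nonneg (hθ0 x) _)
  have hfpos : ∀ x, 0 < ν x → 0 < θ x → 0 < f x := fun x h1 h2 =>
    mul_pos (Real.rpow_pos_of_pos h1 _) (Real.rpow_pos_of_pos h2 _)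
  have hfzero : ∀ x, ¬(0 < ν x * θ x) → f x = 0 := by
    intro x hx
    have : ν x * θ x = 0 := le_antisymm (not_lt.1 hx) (mul_nonneg (hν0 x) (hθ0 x))
    rcases mul_eq_zero.1 this with h | h
    · simp [hf, h, Real.zero_rpow hα0.ne']
    · simp [hf, h, Real.zero_rpow hα1'.ne']
  have hZpos : 0 < Z := by
    rw [hZ]
    exact lt_of_lt_of_le (hfpos x₀ hx₀ν hx₀θ)
      (Finset.single_le_sum (fun i _ => hfnn i) (Finset.mem_univ x₀))
  have hfilter : (∑ x ∈ Finset.univ.filter (fun x => 0 < ν x * θ x),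
      ν x ^ α * θ x ^ (1 - α)) = Z := by
    rw [hZ]
    exact Finset.sum_subset (Finset.filter_subset _ _)
      (fun x _ hx => hfzero x (by simpa using hx))
  have hμ₀nn : ∀ x, 0 ≤ μ₀ x := fun x => by
    rw [hμ₀]; exact div_nonneg (hfnn x) hZpos.le
  have hμ₀sum : ∑ x, μ₀ x = 1 := by
    simp only [hμ₀]
    rw [← Finset.sum_div, ← hZ, div_self hZpos.ne']
  have hμ₀ν : ∀ x, ν x = 0 → μ₀ x = 0 := by
    intro x h; rw [hμ₀]; simp [h, Real.zero_rpow hα0.ne']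
  have hμ₀θ : ∀ x, θ x = 0 → μ₀ x = 0 := by
    intro x h; rw [hμ₀]; simp [h, Real.zero_rpow hα1'.ne']
  -- positivity of μ₀ on the support
  have hμ₀pos : ∀ x, 0 < ν x → 0 < θ x → 0 < μ₀ x := fun x h1 h2 => by
    rw [hμ₀]; exact div_pos (hfpos x h1 h2) hZpos
  have hμ₀iff : ∀ x, 0 < μ₀ x ↔ 0 < ν x * θ x := by
    intro x
    constructor
    · intro h
      by_contra hc
      rw [hμ₀] at h
      have := hfzero x hc
      rw [hf] at this
      simp only [this] at h
      simp at h
    · intro h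
      have hν : 0 < ν x := lt_of_le_of_ne (hν0 x) (by
        rintro rfl0
        exact absurd h (by simp [← rfl0]))
      have hθx : 0 < θ x := lt_of_le_of_ne (hθ0 x) (by
        rintro rfl0
        exact absurd h (by simp [← rfl0]))
      exact hμ₀pos x hν hθx
  -- log of μ₀ on the support
  have hlogμ₀ : ∀ x, 0 < ν x → 0 < θ x →
      Real.log (μ₀ x) = α * Real.log (ν x) + (1 - α) * Real.log (θ x) - Real.log Z := by
    intro x h1 h2
    rw [hμ₀, Real.log_div (hfpos x h1 h2).ne' hZpos.ne',
      Real.log_mul (Real.rpow_pos_of_pos h1 _).ne' (Real.rpow_pos_of_pos h2 _).ne',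
      Real.log_rpow h1, Real.log_rpow h2]
  constructor
  · refine ⟨hμ₀nn, hμ₀sum, hμ₀ν, hμ₀θ, ?_⟩
    rw [hfilter]
    have hTeq : Finset.univ.filter (fun x => 0 < μ₀ x)
        = Finset.univ.filter (fun x => 0 < ν x * θ x) := by
      apply Finset.filter_congr
      intro x _
      simp [hμ₀iff x]
    rw [hTeq]
    rw [Finset.mul_sum, Finset.mul_sum, ← Finset.sum_sub_distrib]
    have hptwise : ∀ x ∈ Finset.univ.filter (fun x => 0 < ν x * θ x),
        1 / α * (μ₀ x * Real.log (μ₀ x / θ x)) -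
          1 / (α - 1) * (μ₀ x * Real.log (μ₀ x / ν x))
        = μ₀ x * (1 / (α * (α - 1)) * Real.log Z) := by
      intro x hx
      rw [Finset.mem_filter] at hx
      have hν : 0 < ν x := by
        rcases hx with ⟨_, hx⟩
        exact lt_of_le_of_ne (hν0 x) (by rintro rfl0; exact absurd hx (by simp [← rfl0]))
      have hθx : 0 < θ x := by
        rcases hx with ⟨_, hx⟩
        exact lt_of_le_of_ne (hθ0 x) (by rintro rfl0; exact absurd hx (by simp [← rfl0]))
      have hm := hμ₀pos x hν hθx
      rw [Real.log_div hm.ne' hθx.ne', Real.log_div hm.ne' hν.ne', hlogμ₀ x hν hθx]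
      field_simp
      ring
    rw [Finset.sum_congr rfl hptwise, ← Finset.sum_mul]
    have : ∑ x ∈ Finset.univ.filter (fun x => 0 < ν x * θ x), μ₀ x = 1 := by
      rw [← hμ₀sum]
      apply Finset.sum_subset (Finset.filter_subset _ _)
      intro x _ hx
      have h0 := hfzero x (by simpa using hx)
      simp only [hf] at h0
      rw [hμ₀, h0]
      simp
    rw [this, one_mul]
  · intro μ hμnn hμsum hμν hμθ
    rw [hfilter]
    set U := Finset.univ.filter (fun x => 0 < μ x) with hU
    have hUpos : ∀ x ∈ U, 0 < μ x := fun x hx => (Finset.mem_filter.1 hx).2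
    have hUν : ∀ x ∈ U, 0 < ν x := by
      intro x hx
      refine lt_of_le_of_ne (hν0 x) fun h => ?_
      have := hμν x h.symm
      exact absurd (hUpos x hx) (by simp [this])
    have hUθ : ∀ x ∈ U, 0 < θ x := by
      intro x hx
      refine lt_of_le_of_ne (hθ0 x) fun h => ?_
      have := hμθ x h.symm
      exact absurd (hUpos x hx) (by simp [this])
    have hUμ₀ : ∀ x ∈ U, 0 < μ₀ x := fun x hx => hμ₀pos x (hUν x hx) (hUθ x hx)
    have hUsum : ∑ x ∈ U, μ x = 1 := by
      rw [← hμsum]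
      apply Finset.sum_subset (Finset.filter_subset _ _)
      intro x _ hx
      have : ¬ 0 < μ x := by simpa [hU] using hx
      exact le_antisymm (not_lt.1 this) (hμnn x)
    have hUμ₀sum : ∑ x ∈ U, μ₀ x ≤ 1 := by
      rw [← hμ₀sum]
      exact Finset.sum_le_sum_of_subset_of_nonneg (Finset.filter_subset _ _)
        (fun x _ _ => hμ₀nn x)
    set c : ℝ := 1 / α - 1 / (α - 1) with hc
    have hcpos : 0 < c := by
      rw [hc]
      have h1 : 0 < 1 / α := by positivity
      have h2 : 1 / (α - 1) < 0 := div_neg_of_pos_of_neg one_pos (by linarith)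
      linarith
    -- pointwise decomposition
    have hptwise : ∀ x ∈ U,
        1 / α * (μ x * Real.log (μ x / θ x)) -
          1 / (α - 1) * (μ x * Real.log (μ x / ν x))
        = c * (μ x * Real.log (μ x / μ₀ x)) + 1 / (α * (α - 1)) * Real.log Z * μ x := by
      intro x hx
      have hμx := hUpos x hx
      have hν := hUν x hx
      have hθx := hUθ x hx
      have hm := hUμ₀ x hx
      rw [Real.log_div hμx.ne' hθx.ne', Real.log_div hμx.ne' hν.ne',
        Real.log_div hμx.ne' hm.ne', hlogμ₀ x hν hθx, hc]
      field_simp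
      ring
    rw [Finset.mul_sum, Finset.mul_sum, ← Finset.sum_sub_distrib,
      Finset.sum_congr rfl hptwise, Finset.sum_add_distrib, ← Finset.mul_sum,
      ← Finset.mul_sum, hUsum, mul_one]
    have hgibbs : 0 ≤ ∑ x ∈ U, μ x * Real.log (μ x / μ₀ x) := by
      have := gibbs_sum U μ μ₀ hUpos hUμ₀
      linarith [hUμ₀sum, hUsum.ge, this]
    nlinarith [mul_nonneg hcpos.le hgibbs]
end

section
/- Variational characterization of Rényi divergence for α > 1 (finite case with mutual absolute continuity): if ν, θ are probability mass functions on a finite set with ν ⪯ θ, then R_α(ν‖θ) = sup over probability mass functions μ with μ ⪯ ν of ((1/α) D(μ‖θ) − (1/(α−1)) D(μ‖ν)). -/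
open Finset Real
open Classical

/-- Variational characterization of Rényi divergence for α > 1 (finite case, ν ⪯ θ):
R_α(ν‖θ) is the supremum (attained) over pmfs μ ⪯ ν of
(1/α)D(μ‖θ) - (1/(α-1))D(μ‖ν). -/
theorem renyi_variational_big_alpha {S : Type} [Fintype S]
    (ν θ : S → ℝ) (α : ℝ) (hα : 1 < α)
    (hν0 : ∀ x, 0 ≤ ν x) (hν1 : ∑ x, ν x = 1)
    (hθ0 : ∀ x, 0 ≤ θ x) (hθ1 : ∑ x, θ x = 1)
    (hνθ : ∀ x, θ x = 0 → ν x = 0) :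
    IsGreatest
      {v : ℝ | ∃ μ : S → ℝ, (∀ x, 0 ≤ μ x) ∧ (∑ x, μ x = 1) ∧
        (∀ x, ν x = 0 → μ x = 0) ∧
        v = (1 / α) * (∑ x ∈ Finset.univ.filter (fun x => 0 < μ x),
              μ x * Real.log (μ x / θ x)) -
            (1 / (α - 1)) * (∑ x ∈ Finset.univ.filter (fun x => 0 < μ x),
              μ x * Real.log (μ x / ν x))}
      ((1 / (α * (α - 1))) *
        Real.log (∑ x ∈ Finset.univ.filter (fun x => 0 < ν x * θ x),
          ν x ^ α * θ x ^ (1 - α))) := by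
  have hα0 : (0:ℝ) < α := one_pos.trans hα
  have hα1 : (0:ℝ) < α - 1 := sub_pos.2 hα
  have hαne : α ≠ 0 := ne_of_gt hα0
  have hα1ne : α - 1 ≠ 0 := ne_of_gt hα1
  have hθpos : ∀ x, 0 < ν x → 0 < θ x := by
    intro x h
    rcases (hθ0 x).lt_or_eq with h' | h'
    · exact h'
    · exact absurd (hνθ x h'.symm) (ne_of_gt h)
  set g : S → ℝ := fun x => ν x ^ α * θ x ^ (1 - α) with hg
  have hg0 : ∀ x, 0 ≤ g x := fun x =>
    mul_nonneg (Real.rpow_nonneg (hν0 x) _) (Real.rpow_nonneg (hθ0 x) _)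
  have hgpos : ∀ x, 0 < ν x → 0 < g x := fun x h =>
    mul_pos (Real.rpow_pos_of_pos h _) (Real.rpow_pos_of_pos (hθpos x h) _)
  have hgz : ∀ x, ν x = 0 → g x = 0 := by
    intro x h; simp [hg, h, Real.zero_rpow hαne]
  have hfilter : (univ.filter fun x => 0 < ν x * θ x) = univ.filter fun x => 0 < ν x := by
    ext x
    simp only [mem_filter, mem_univ, true_and]
    constructor
    · intro h
      rcases (hν0 x).lt_or_eq with h' | h'
      · exact h'
      · simp [← h'] at h
    · intro h; exact mul_pos h (hθpos x h)
  set Z : ℝ := ∑ x ∈ univ.filter (fun x => 0 < ν x), g x with hZ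
  have hx0 : ∃ x, 0 < ν x := by
    by_contra h
    push_neg at h
    have : ∑ x, ν x = 0 :=
      Finset.sum_eq_zero (fun x _ => le_antisymm (h x) (hν0 x))
    rw [hν1] at this; norm_num at this
  obtain ⟨x0, hx0⟩ := hx0
  have hZpos : 0 < Z :=
    Finset.sum_pos' (fun x _ => hg0 x) ⟨x0, by simpa using hx0, hgpos _ hx0⟩
  have hZuniv : Z = ∑ x, g x := by
    refine Finset.sum_subset (Finset.filter_subset _ _) ?_
    intro x _ hx
    simp only [mem_filter, mem_univ, true_and, not_lt] at hx
    exact hgz x (le_antisymm hx (hν0 x))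
  -- key identity
  have key : ∀ μ : S → ℝ, (∀ x, 0 ≤ μ x) → (∀ x, ν x = 0 → μ x = 0) →
      (1/α) * (∑ x ∈ univ.filter (fun x => 0 < μ x), μ x * Real.log (μ x / θ x)) -
      (1/(α-1)) * (∑ x ∈ univ.filter (fun x => 0 < μ x), μ x * Real.log (μ x / ν x)) =
      (1/(α*(α-1))) * ∑ x ∈ univ.filter (fun x => 0 < μ x), μ x * Real.log (g x / μ x) := by
    intro μ hμ0 hμν
    rw [Finset.mul_sum, Finset.mul_sum, Finset.mul_sum, ← Finset.sum_sub_distrib]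
    refine Finset.sum_congr rfl ?_
    intro x hx
    simp only [mem_filter, mem_univ, true_and] at hx
    have hνx : 0 < ν x := by
      rcases (hν0 x).lt_or_eq with h | h
      · exact h
      · exact absurd (hμν x h.symm) (ne_of_gt hx)
    have hθx := hθpos x hνx
    have hlogg : Real.log (g x) = α * Real.log (ν x) + (1-α) * Real.log (θ x) := by
      simp only [hg]
      rw [Real.log_mul (ne_of_gt (Real.rpow_pos_of_pos hνx α))
          (ne_of_gt (Real.rpow_pos_of_pos hθx (1-α))),
        Real.log_rpow hνx, Real.log_rpow hθx]
    rw [Real.log_div (ne_of_gt hx) (ne_of_gt hθx),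
      Real.log_div (ne_of_gt hx) (ne_of_gt hνx),
      Real.log_div (ne_of_gt (hgpos x hνx)) (ne_of_gt hx), hlogg]
    field_simp
    ring
  constructor
  · -- membership: the tilted distribution attains the value
    refine ⟨fun x => g x / Z, fun x => div_nonneg (hg0 x) hZpos.le, ?_, ?_, ?_⟩
    · rw [← Finset.sum_div, ← hZuniv, div_self hZpos.ne']
    · intro x h; simp [hgz x h]
    · have hfμ : (univ.filter fun x => 0 < g x / Z) = univ.filter fun x => 0 < ν x := by
        ext x
        simp only [mem_filter, mem_univ, true_and]
        constructor
        · intro h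
          rcases (hν0 x).lt_or_eq with h' | h'
          · exact h'
          · rw [hgz x h'.symm] at h; simp at h
        · intro h; exact div_pos (hgpos x h) hZpos
      rw [key _ (fun x => div_nonneg (hg0 x) hZpos.le) (fun x h => by simp [hgz x h]),
        hfμ, hfilter]
      have hpt : ∀ x ∈ univ.filter (fun x => 0 < ν x),
          g x / Z * Real.log (g x / (g x / Z)) = g x / Z * Real.log Z := by
        intro x hx
        simp only [mem_filter, mem_univ, true_and] at hx
        have hgx : 0 < g x := hgpos x hx
        rw [div_div_eq_mul_div, mul_div_cancel_left₀ _ hgx.ne']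
      rw [Finset.sum_congr rfl hpt, ← Finset.sum_mul, ← Finset.sum_div,
        div_self hZpos.ne', one_mul]
  · -- upper bound
    rintro v ⟨μ, hμ0, hμ1, hμν, rfl⟩
    rw [key μ hμ0 hμν, hfilter]
    refine mul_le_mul_of_nonneg_left ?_ (by positivity)
    set T : Finset S := univ.filter (fun x => 0 < μ x) with hT
    have hμpos : ∀ x ∈ T, 0 < μ x := by
      intro x hx; simpa [hT] using hx
    have hνpos : ∀ x ∈ T, 0 < ν x := by
      intro x hx
      have hx' := hμpos x hx
      rcases (hν0 x).lt_or_eq with h | h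
      · exact h
      · exact absurd (hμν x h.symm) (ne_of_gt hx')
    have hTsub : T ⊆ univ.filter (fun x => 0 < ν x) := by
      intro x hx
      simp only [mem_filter, mem_univ, true_and]
      exact hνpos x hx
    have hsum : ∑ x ∈ T, μ x = 1 := by
      rw [← hμ1]
      refine Finset.sum_subset (Finset.filter_subset _ _) ?_
      intro x _ hx
      simp only [hT, mem_filter, mem_univ, true_and, not_lt] at hx
      exact le_antisymm hx (hμ0 x)
    have step : ∀ x ∈ T, μ x * Real.log (g x / μ x) - μ x * Real.log Z
        ≤ g x / Z - μ x := by
      intro x hx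
      have hμx : 0 < μ x := hμpos x hx
      have hgx : 0 < g x := hgpos x (hνpos x hx)
      have h1 : Real.log (g x / μ x) - Real.log Z = Real.log (g x / (μ x * Z)) := by
        rw [Real.log_div hgx.ne' hμx.ne', Real.log_div hgx.ne' (by positivity),
          Real.log_mul hμx.ne' hZpos.ne']
        ring
      rw [← mul_sub, h1]
      have h2 : Real.log (g x / (μ x * Z)) ≤ g x / (μ x * Z) - 1 :=
        Real.log_le_sub_one_of_pos (by positivity)
      calc μ x * Real.log (g x / (μ x * Z)) ≤ μ x * (g x / (μ x * Z) - 1) :=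
            mul_le_mul_of_nonneg_left h2 hμx.le
        _ = g x / Z - μ x := by field_simp
    have hsle := Finset.sum_le_sum step
    rw [Finset.sum_sub_distrib, Finset.sum_sub_distrib, ← Finset.sum_mul, hsum,
      one_mul] at hsle
    have h3 : ∑ x ∈ T, g x / Z ≤ 1 := by
      rw [← Finset.sum_div, div_le_one hZpos]
      exact Finset.sum_le_sum_of_subset_of_nonneg hTsub (fun x _ _ => hg0 x)
    linarith
end

section
/- Attainment in the Atar–Chowdhary–Dupuis formula (finite case, α > 0, α ≠ 1): given a probability mass function θ on a finite set S and g : S → ℝ, define ν by ν(x) = Z e^{g(x)} θ(x) with Z = 1/∑_y e^{g(y)} θ(y). Then (1/(α−1)) log ∑_x e^{(α−1)g(x)} ν(x) − R_α(ν‖θ) = (1/α) log ∑_x e^{α g(x)} θ(x). -/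
open Finset Real
open Classical

/-- Attainment in the ACD formula (finite case, α > 0, α ≠ 1): with
ν(x) = e^{g(x)} θ(x) / ∑_y e^{g(y)} θ(y), one has
(1/(α-1)) log ∑_x e^{(α-1)g(x)} ν(x) - R_α(ν‖θ) = (1/α) log ∑_x e^{α g(x)} θ(x). -/
theorem acd_sup_attained {S : Type} [Fintype S] [Nonempty S]
    (θ : S → ℝ) (g : S → ℝ) (α : ℝ) (hα0 : 0 < α) (hα1 : α ≠ 1)
    (hθ0 : ∀ x, 0 ≤ θ x) (hθ1 : ∑ x, θ x = 1)
    (ν : S → ℝ) (hν : ∀ x, ν x = Real.exp (g x) * θ x / ∑ y, Real.exp (g y) * θ y) :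
    (1 / (α - 1)) * Real.log (∑ x, Real.exp ((α - 1) * g x) * ν x) -
        (1 / (α * (α - 1))) *
          Real.log (∑ x ∈ Finset.univ.filter (fun x => 0 < ν x * θ x),
            ν x ^ α * θ x ^ (1 - α)) =
      (1 / α) * Real.log (∑ x, Real.exp (α * g x) * θ x) := by
  set Z : ℝ := ∑ y, Real.exp (g y) * θ y with hZ
  set A : ℝ := ∑ x, Real.exp (α * g x) * θ x with hA
  -- there is some x with θ x > 0
  obtain ⟨x₀, hx₀⟩ : ∃ x, 0 < θ x := by
    by_contra h
    push_neg at h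
    have : ∑ x, θ x = 0 := Finset.sum_eq_zero fun x _ => le_antisymm (h x) (hθ0 x)
    rw [hθ1] at this; norm_num at this
  have hZ0 : 0 < Z := by
    apply Finset.sum_pos' (fun x _ => mul_nonneg (Real.exp_pos _).le (hθ0 x))
    exact ⟨x₀, Finset.mem_univ _, mul_pos (Real.exp_pos _) hx₀⟩
  have hA0 : 0 < A := by
    apply Finset.sum_pos' (fun x _ => mul_nonneg (Real.exp_pos _).le (hθ0 x))
    exact ⟨x₀, Finset.mem_univ _, mul_pos (Real.exp_pos _) hx₀⟩
  have hα1' : α - 1 ≠ 0 := sub_ne_zero.mpr hα1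
  -- first sum
  have h1 : (∑ x, Real.exp ((α - 1) * g x) * ν x) = A / Z := by
    rw [hA, Finset.sum_div]
    apply Finset.sum_congr rfl
    intro x _
    rw [hν x, ← mul_div_assoc, ← mul_assoc, ← Real.exp_add]
    ring_nf
  -- filter equals positive θ
  have hfilt : (Finset.univ.filter (fun x => 0 < ν x * θ x))
      = Finset.univ.filter (fun x => 0 < θ x) := by
    apply Finset.filter_congr
    intro x _
    simp only [hν x]
    constructor
    · intro h
      rcases (hθ0 x).lt_or_eq with h' | h'
      · exact h'
      · exfalso; rw [← h'] at h; simp at h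
    · intro h
      have : 0 < Real.exp (g x) * θ x / Z := by positivity
      positivity
  have h2 : (∑ x ∈ Finset.univ.filter (fun x => 0 < ν x * θ x),
      ν x ^ α * θ x ^ (1 - α)) = A / Z ^ α := by
    rw [hfilt]
    have : (∑ x ∈ Finset.univ.filter (fun x => 0 < θ x),
        ν x ^ α * θ x ^ (1 - α))
        = ∑ x ∈ Finset.univ.filter (fun x => 0 < θ x),
          Real.exp (α * g x) * θ x / Z ^ α := by
      apply Finset.sum_congr rfl
      intro x hx
      rw [Finset.mem_filter] at hx
      have hθx : 0 < θ x := hx.2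
      rw [hν x]
      rw [Real.div_rpow (by positivity) hZ0.le,
        Real.mul_rpow (Real.exp_pos _).le hθx.le,
        ← Real.exp_one_rpow (g x), ← Real.rpow_mul (Real.exp_pos 1).le,
        Real.exp_one_rpow]
      rw [div_mul_eq_mul_div, mul_assoc, ← Real.rpow_add hθx, add_sub_cancel,
        Real.rpow_one, mul_comm (g x) α]
    rw [this, ← Finset.sum_div, hA]
    congr 1
    rw [Finset.sum_filter]
    apply Finset.sum_congr rfl
    intro x _
    split_ifs with h
    · rfl
    · push_neg at h
      have : θ x = 0 := le_antisymm h (hθ0 x)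
      rw [this, mul_zero]
  rw [h1, h2]
  rw [Real.log_div hA0.ne' hZ0.ne', Real.log_div hA0.ne' (by positivity),
    Real.log_rpow hZ0]
  field_simp
  ring
end

section
/- ACD inequality for α > 1 (finite case): for probability mass functions θ, ν on a finite set with ν ⪯ θ, and any g : S → ℝ, (1/α) log ∑_x e^{α g(x)} θ(x) ≥ (1/(α−1)) log ∑_x e^{(α−1) g(x)} ν(x) − R_α(ν‖θ). -/
open Finset Real
open Classical

/-!
Weighted Hölder's inequality with exponent `α`, weights `exp (α g) θ` and the function
`ν exp (-g) / θ` gives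
`∑ exp ((α - 1) g) ν ≤ (∑ exp (α g) θ) ^ (1 - 1/α) * (∑ ν ^ α θ ^ (1 - α)) ^ (1/α)`;
taking logarithms and dividing by `α - 1` yields the inequality.
-/

variable {ι : Type*} {s : Finset ι} {θ ν : ι → ℝ} {α : ℝ}

theorem sum_filter_pos_mul_rpow_eq (hα : α ≠ 0) (hθ : ∀ x, 0 ≤ θ x) (hν : ∀ x, 0 ≤ ν x)
    (hνθ : ∀ x, θ x = 0 → ν x = 0) :
    ∑ x ∈ s.filter (fun x => 0 < ν x * θ x), ν x ^ α * θ x ^ (1 - α) =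
      ∑ x ∈ s, ν x ^ α * θ x ^ (1 - α) := by
  refine sum_filter_of_ne fun x _ hx => ?_
  have hνx : ν x ≠ 0 := fun h => hx (by simp [h, zero_rpow hα])
  exact mul_pos ((hν x).lt_of_ne' hνx) ((hθ x).lt_of_ne' (mt (hνθ x) hνx))

theorem sum_exp_mul_le_rpow_mul_rpow (g : ι → ℝ) (hα : 1 ≤ α) (hθ : ∀ x, 0 ≤ θ x)
    (hν : ∀ x, 0 ≤ ν x) (hνθ : ∀ x, θ x = 0 → ν x = 0) :
    ∑ x ∈ s, exp ((α - 1) * g x) * ν x ≤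
      (∑ x ∈ s, exp (α * g x) * θ x) ^ (1 - α⁻¹) *
        (∑ x ∈ s, ν x ^ α * θ x ^ (1 - α)) ^ α⁻¹ := by
  have hα0 : α ≠ 0 := by positivity
  set w : ι → ℝ := fun x => exp (α * g x) * θ x
  set f : ι → ℝ := fun x => ν x * exp (-g x) / θ x
  have hw : ∀ x, 0 ≤ w x := fun x => by have := hθ x; positivity
  have hf : ∀ x, 0 ≤ f x := fun x => by have := hθ x; have := hν x; positivity
  have hwf : ∀ x, w x * f x = exp ((α - 1) * g x) * ν x := fun x => by
    rcases (hθ x).eq_or_lt with h0 | h0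
    · simp [w, f, ← h0, hνθ x h0.symm]
    · simp only [w, f]
      field_simp
      rw [show g x * (α - 1) = α * g x + -g x by ring, exp_add]
      ring
  have hwfα : ∀ x, w x * f x ^ α = ν x ^ α * θ x ^ (1 - α) := fun x => by
    rcases (hθ x).eq_or_lt with h0 | h0
    · simp [w, f, ← h0, hνθ x h0.symm, zero_rpow hα0]
    · simp only [w, f]
      rw [div_rpow (by have := hν x; positivity) h0.le, mul_rpow (hν x) (exp_pos _).le,
        ← exp_mul, rpow_sub h0, rpow_one]
      field_simp
      rw [mul_right_comm, ← exp_add, add_neg_cancel, exp_zero, one_mul]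
  simpa only [hwf, hwfα] using inner_le_weight_mul_Lp_of_nonneg s hα w f hw hf

theorem log_le_of_le_rpow_mul_rpow {L A B a : ℝ} (hL : 0 < L) (hA : 0 < A) (hB : 0 < B)
    (h : L ≤ B ^ (1 - a) * A ^ a) : log L ≤ (1 - a) * log B + a * log A := by
  have := log_le_log hL h
  rwa [log_mul (rpow_pos_of_pos hB _).ne' (rpow_pos_of_pos hA _).ne', log_rpow hB,
    log_rpow hA] at this

theorem acd_inequality_big_alpha_general {S : Type} [Fintype S]
    (θ ν : S → ℝ) (g : S → ℝ) (α : ℝ) (hα : 1 < α)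
    (hθ0 : ∀ x, 0 ≤ θ x)
    (hν0 : ∀ x, 0 ≤ ν x) (hν1 : ∑ x, ν x = 1)
    (hνθ : ∀ x, θ x = 0 → ν x = 0) :
    (1 / α) * Real.log (∑ x, Real.exp (α * g x) * θ x) ≥
      (1 / (α - 1)) * Real.log (∑ x, Real.exp ((α - 1) * g x) * ν x) -
        (1 / (α * (α - 1))) *
          Real.log (∑ x ∈ Finset.univ.filter (fun x => 0 < ν x * θ x),
            ν x ^ α * θ x ^ (1 - α)) := by
  obtain ⟨x₀, -, hνx₀⟩ : ∃ x ∈ univ, 0 < ν x := exists_lt_of_sum_lt (by simp [hν1])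
  have hθx₀ : 0 < θ x₀ := (hθ0 x₀).lt_of_ne' fun h => hνx₀.ne' (hνθ x₀ h)
  have hlog := log_le_of_le_rpow_mul_rpow
    (sum_pos' (fun x _ => mul_nonneg (exp_pos _).le (hν0 x))
      ⟨x₀, mem_univ _, mul_pos (exp_pos _) hνx₀⟩)
    (sum_pos' (fun x _ => mul_nonneg (rpow_nonneg (hν0 x) _) (rpow_nonneg (hθ0 x) _))
      ⟨x₀, mem_univ _, mul_pos (rpow_pos_of_pos hνx₀ _) (rpow_pos_of_pos hθx₀ _)⟩)
    (sum_pos' (fun x _ => mul_nonneg (exp_pos _).le (hθ0 x))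
      ⟨x₀, mem_univ _, mul_pos (exp_pos _) hθx₀⟩)
    (sum_exp_mul_le_rpow_mul_rpow g hα.le hθ0 hν0 hνθ)
  rw [sum_filter_pos_mul_rpow_eq (by positivity) hθ0 hν0 hνθ, ge_iff_le, sub_le_iff_le_add]
  have hα1 : 0 < α - 1 := sub_pos.2 hα
  calc 1 / (α - 1) * log (∑ x, exp ((α - 1) * g x) * ν x)
      ≤ 1 / (α - 1) * ((1 - α⁻¹) * log (∑ x, exp (α * g x) * θ x) +
          α⁻¹ * log (∑ x, ν x ^ α * θ x ^ (1 - α))) := by gcongr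
    _ = _ := by field_simp

/-- ACD inequality for α > 1 (finite case): for pmfs θ, ν with ν ⪯ θ and any g,
(1/α) log ∑ e^{αg} θ ≥ (1/(α-1)) log ∑ e^{(α-1)g} ν - R_α(ν‖θ). -/
theorem acd_inequality_big_alpha {S : Type} [Fintype S]
    (θ ν : S → ℝ) (g : S → ℝ) (α : ℝ) (hα : 1 < α)
    (hθ0 : ∀ x, 0 ≤ θ x) (hθ1 : ∑ x, θ x = 1)
    (hν0 : ∀ x, 0 ≤ ν x) (hν1 : ∑ x, ν x = 1)
    (hνθ : ∀ x, θ x = 0 → ν x = 0) :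
    (1 / α) * Real.log (∑ x, Real.exp (α * g x) * θ x) ≥
      (1 / (α - 1)) * Real.log (∑ x, Real.exp ((α - 1) * g x) * ν x) -
        (1 / (α * (α - 1))) *
          Real.log (∑ x ∈ Finset.univ.filter (fun x => 0 < ν x * θ x),
            ν x ^ α * θ x ^ (1 - α)) :=
  acd_inequality_big_alpha_general θ ν g α hα hθ0 hν0 hν1 hνθ
end

section
/- ACD variational formula for 0 < α < 1 (finite case): for probability mass functions θ, ν on a finite set whose supports intersect, and any g : S → ℝ, (1/α) log ∑_x e^{α g(x)} θ(x) ≥ (1/(α−1)) log ∑_x e^{(α−1) g(x)} ν(x) − R_α(ν‖θ). -/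
open Finset Real

/-! With `f = e^{(α-1)g} ν` and `h = e^{αg} θ` the tilts cancel pointwise, `f^α h^{1-α} = ν^α θ^{1-α}`,
so Hölder's inequality with exponents `1/α`, `1/(1-α)` bounds `∑ ν^α θ^{1-α}` by
`(∑ f)^α (∑ h)^{1-α}`. Taking logarithms and dividing by `α(1-α) > 0` gives the inequality. -/

theorem sum_rpow_mul_rpow_le {ι : Type*} (s : Finset ι) {f h : ι → ℝ} {α : ℝ}
    (hα0 : 0 < α) (hα1 : α < 1) (hf : ∀ i ∈ s, 0 ≤ f i) (hh : ∀ i ∈ s, 0 ≤ h i) :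
    ∑ i ∈ s, f i ^ α * h i ^ (1 - α) ≤ (∑ i ∈ s, f i) ^ α * (∑ i ∈ s, h i) ^ (1 - α) := by
  have hβ : 0 < 1 - α := sub_pos.2 hα1
  have holder := Lr_rpow_le_Lp_mul_Lq_of_nonneg s
    (holderConjugate_one_div hα0 hβ (by ring)) (f := fun i => f i ^ α)
    (g := fun i => h i ^ (1 - α)) (fun i hi => rpow_nonneg (hf i hi) _)
    (fun i hi => rpow_nonneg (hh i hi) _)
  simp only [rpow_one, one_div, inv_inv] at holder
  rwa [sum_congr rfl fun i hi => rpow_rpow_inv (hf i hi) hα0.ne',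
    sum_congr rfl fun i hi => rpow_rpow_inv (hh i hi) hβ.ne'] at holder

theorem sum_filter_mul_pos_rpow_mul_rpow {ι : Type*} (s : Finset ι) {a b : ι → ℝ} {p q : ℝ}
    (hp : p ≠ 0) (hq : q ≠ 0) (ha : ∀ i ∈ s, 0 ≤ a i) (hb : ∀ i ∈ s, 0 ≤ b i) :
    ∑ i ∈ s.filter (fun i => 0 < a i * b i), a i ^ p * b i ^ q = ∑ i ∈ s, a i ^ p * b i ^ q := by
  refine sum_filter_of_ne fun i hi hne => mul_pos ?_ ?_
  · refine (ha i hi).lt_of_ne' fun h0 => hne ?_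
    rw [h0, zero_rpow hp, zero_mul]
  · refine (hb i hi).lt_of_ne' fun h0 => hne ?_
    rw [h0, zero_rpow hq, mul_zero]

theorem rpow_mul_rpow_exp_tilt {a b : ℝ} (ha : 0 ≤ a) (hb : 0 ≤ b) (α t : ℝ) :
    (exp ((α - 1) * t) * a) ^ α * (exp (α * t) * b) ^ (1 - α) = a ^ α * b ^ (1 - α) := by
  rw [mul_rpow (exp_nonneg _) ha, mul_rpow (exp_nonneg _) hb, ← exp_mul, ← exp_mul]
  have : exp ((α - 1) * t * α) * exp (α * t * (1 - α)) = 1 := by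
    rw [← exp_add, ← exp_zero]; ring_nf
  linear_combination (a ^ α * b ^ (1 - α)) * this

theorem acd_inequality_small_alpha_general {S : Type} [Fintype S]
    (θ ν : S → ℝ) (g : S → ℝ) (α : ℝ) (hα0 : 0 < α) (hα1 : α < 1)
    (hθ0 : ∀ x, 0 ≤ θ x)
    (hν0 : ∀ x, 0 ≤ ν x)
    (hsupp : ∃ x, 0 < ν x ∧ 0 < θ x) :
    (1 / α) * Real.log (∑ x, Real.exp (α * g x) * θ x) ≥
      (1 / (α - 1)) * Real.log (∑ x, Real.exp ((α - 1) * g x) * ν x) -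
        (1 / (α * (α - 1))) *
          Real.log (∑ x ∈ Finset.univ.filter (fun x => 0 < ν x * θ x),
            ν x ^ α * θ x ^ (1 - α)) := by
  obtain ⟨x₀, hνx₀, hθx₀⟩ := hsupp
  have hβ : 0 < 1 - α := sub_pos.2 hα1
  rw [sum_filter_mul_pos_rpow_mul_rpow _ hα0.ne' hβ.ne' (fun x _ => hν0 x) (fun x _ => hθ0 x)]
  set A := ∑ x, exp (α * g x) * θ x
  set B := ∑ x, exp ((α - 1) * g x) * ν x
  set C := ∑ x, ν x ^ α * θ x ^ (1 - α)
  have hA : 0 < A := sum_pos' (fun x _ => mul_nonneg (exp_nonneg _) (hθ0 x))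
    ⟨x₀, mem_univ _, mul_pos (exp_pos _) hθx₀⟩
  have hB : 0 < B := sum_pos' (fun x _ => mul_nonneg (exp_nonneg _) (hν0 x))
    ⟨x₀, mem_univ _, mul_pos (exp_pos _) hνx₀⟩
  have hC : 0 < C := sum_pos' (fun x _ => by have := hν0 x; have := hθ0 x; positivity)
    ⟨x₀, mem_univ _, by positivity⟩
  have holder : C ≤ B ^ α * A ^ (1 - α) := by
    simpa only [rpow_mul_rpow_exp_tilt (hν0 _) (hθ0 _)] using
      sum_rpow_mul_rpow_le univ hα0 hα1 (f := fun x => exp ((α - 1) * g x) * ν x)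
        (h := fun x => exp (α * g x) * θ x) (fun x _ => mul_nonneg (exp_nonneg _) (hν0 x))
        (fun x _ => mul_nonneg (exp_nonneg _) (hθ0 x))
  have log_holder : log C ≤ α * log B + (1 - α) * log A := by
    rw [← log_rpow hB, ← log_rpow hA, ← log_mul (by positivity) (by positivity)]
    exact log_le_log hC holder
  have hdiff : 1 / α * log A - (1 / (α - 1) * log B - 1 / (α * (α - 1)) * log C) =
      (α * log B + (1 - α) * log A - log C) / (α * (1 - α)) := by
    field_simp [hα0.ne', hβ.ne', (sub_neg.2 hα1).ne]
    ring
  rw [ge_iff_le, ← sub_nonneg, hdiff]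
  exact div_nonneg (by linarith) (mul_pos hα0 hβ).le

/-- ACD inequality for 0 < α < 1 (finite case): for pmfs θ, ν with intersecting
supports and any g,
(1/α) log ∑ e^{αg} θ ≥ (1/(α-1)) log ∑ e^{(α-1)g} ν - R_α(ν‖θ). -/
theorem acd_inequality_small_alpha {S : Type} [Fintype S]
    (θ ν : S → ℝ) (g : S → ℝ) (α : ℝ) (hα0 : 0 < α) (hα1 : α < 1)
    (hθ0 : ∀ x, 0 ≤ θ x) (hθ1 : ∑ x, θ x = 1)
    (hν0 : ∀ x, 0 ≤ ν x) (hν1 : ∑ x, ν x = 1)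
    (hsupp : ∃ x, 0 < ν x ∧ 0 < θ x) :
    (1 / α) * Real.log (∑ x, Real.exp (α * g x) * θ x) ≥
      (1 / (α - 1)) * Real.log (∑ x, Real.exp ((α - 1) * g x) * ν x) -
        (1 / (α * (α - 1))) *
          Real.log (∑ x ∈ Finset.univ.filter (fun x => 0 < ν x * θ x),
            ν x ^ α * θ x ^ (1 - α)) :=
  acd_inequality_small_alpha_general θ ν g α hα0 hα1 hθ0 hν0 hsupp
end

section
/- Varadhan's spectral radius characterization, lower-bound half (finite Markov case): for any stationary Markov distribution μ ∈ 𝓜(S×S) on a finite set S, any G : S×S → ℝ, and any stationary Markov distribution θ ⪯ μ, the growth rate ρ of the matrix [e^{G(i,j)} μ(j|i)] satisfies ρ([e^{G(i,j)} μ(j|i)]) ≥ ∑_{i,j} G(i,j) θ(i,j) − D̄(θ‖μ). -/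
open Finset Real Filter
open Classical

/-- Conditional transition probability of a Markov edge-measure (0 off support,
using Lean's convention 0/0 = 0). -/
noncomputable def condProb {d : ℕ} (μ : Fin d → Fin d → ℝ) (i j : Fin d) : ℝ :=
  μ i j / ∑ k, μ i k

/-!
Let `p` be the common marginal of `θ`, `M = [e^{G(i,j)} μ(j|i)]` and `uₙ = Mⁿ 1`.
Jensen's inequality for `log`, applied in each row `i` with the weights `θ(·|i)`, gives
`∑ p log uₙ₊₁ ≥ ∑ p log uₙ + ∑ G θ - D̄(θ‖μ)`; stationarity of `θ` is what turns
the `∑ᵢⱼ θ(i,j) log uₙ(j)` produced by Jensen back into `∑ p log uₙ`. This is the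
Donsker–Varadhan inequality for the `n`-step path measures, unrolled one step at a time.
Hence `∑ p log uₙ ≥ n (∑ G θ - D̄)`, and Jensen once more bounds the left side by
`log ∑ᵢ uₙ(i) = log ∑ᵢⱼ Mⁿ(i,j)`.
-/

theorem Real.sum_mul_log_le_log_of_sum_mul_le {ι : Type*} [Fintype ι] {w z : ι → ℝ}
    {y : ℝ} (hw : ∀ i, 0 ≤ w i) (hw1 : ∑ i, w i = 1) (hz : ∀ i, 0 < w i → 0 < z i)
    (hy : ∑ i, w i * z i ≤ y) :
    ∑ i, w i * log (z i) ≤ log y := by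
  set s := univ.filter fun i => 0 < w i
  have hmem : ∀ i ∈ s, 0 < w i := fun i hi => (mem_filter.1 hi).2
  have on_support : ∀ f : ι → ℝ, ∑ i ∈ s, w i * f i = ∑ i, w i * f i := fun f =>
    sum_filter_of_ne fun i _ h => (hw i).lt_of_ne (left_ne_zero_of_mul h).symm
  have hs1 : ∑ i ∈ s, w i = 1 :=
    (sum_filter_of_ne fun i _ h => (hw i).lt_of_ne (Ne.symm h)).trans hw1
  obtain ⟨i₀, hi₀⟩ : s.Nonempty := nonempty_of_sum_ne_zero (hs1.symm ▸ one_ne_zero)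
  have hpos : 0 < ∑ i ∈ s, w i * z i :=
    sum_pos' (fun i hi => (mul_pos (hmem i hi) (hz i (hmem i hi))).le)
      ⟨i₀, hi₀, mul_pos (hmem i₀ hi₀) (hz i₀ (hmem i₀ hi₀))⟩
  have jensen := strictConcaveOn_log_Ioi.concaveOn.le_map_sum (fun i hi => (hmem i hi).le)
    hs1 (fun i hi => hz i (hmem i hi))
  simp only [smul_eq_mul, on_support] at jensen
  exact jensen.trans (log_le_log (on_support z ▸ hpos) hy)

theorem Real.sum_mul_log_le_log_sum {ι : Type*} [Fintype ι] {w z : ι → ℝ}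
    (hw : ∀ i, 0 ≤ w i) (hw1 : ∑ i, w i = 1) (hz₀ : ∀ i, 0 ≤ z i)
    (hz : ∀ i, 0 < w i → 0 < z i) :
    ∑ i, w i * log (z i) ≤ log (∑ i, z i) :=
  sum_mul_log_le_log_of_sum_mul_le hw hw1 hz <| sum_le_sum fun i _ =>
    mul_le_of_le_one_left (hz₀ i) (hw1 ▸ single_le_sum (fun j _ => hw j) (mem_univ i))

theorem le_of_tendsto_one_div_mul_of_nat_mul_le {a : ℕ → ℝ} {c ρ : ℝ}
    (h : Tendsto (fun n : ℕ => (1 / (n : ℝ)) * a n) atTop (nhds ρ))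
    (hc : ∀ n : ℕ, n * c ≤ a n) : c ≤ ρ := by
  refine ge_of_tendsto h ((eventually_ge_atTop 1).mono fun n hn => ?_)
  rw [one_div_mul_eq_div, le_div_iff₀' (by exact_mod_cast hn)]
  exact hc n

open scoped Matrix

variable {d : ℕ}

noncomputable def tilt (G μ : Fin d → Fin d → ℝ) : Matrix (Fin d) (Fin d) ℝ :=
  Matrix.of fun i j => exp (G i j) * condProb μ i j

noncomputable def relEntropyRate (θ μ : Fin d → Fin d → ℝ) : ℝ :=
  ∑ i, ∑ j ∈ univ.filter (fun j => 0 < θ i j),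
    θ i j * log (condProb θ i j / condProb μ i j)

section condProb

variable {μ θ : Fin d → Fin d → ℝ} {i j : Fin d}

theorem condProb_nonneg (hμ : ∀ j, 0 ≤ μ i j) (j : Fin d) : 0 ≤ condProb μ i j :=
  div_nonneg (hμ j) (sum_nonneg fun k _ => hμ k)

theorem condProb_pos (hμ : ∀ j, 0 ≤ μ i j) (h : 0 < μ i j) : 0 < condProb μ i j :=
  div_pos h (h.trans_le (single_le_sum (fun k _ => hμ k) (mem_univ j)))

theorem sum_condProb (h : ∑ k, θ i k ≠ 0) : ∑ j, condProb θ i j = 1 := by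
  simp only [condProb, ← sum_div, div_self h]

theorem sum_mul_condProb (h : ∑ k, θ i k ≠ 0) : (∑ k, θ i k) * condProb θ i j = θ i j :=
  mul_div_cancel₀ _ h

theorem sum_mul_log_div_condProb_le {M : Matrix (Fin d) (Fin d) ℝ} {u : Fin d → ℝ}
    (hθ : ∀ j, 0 ≤ θ i j) (hMu : ∀ j, 0 ≤ M i j * u j)
    (hpos : ∀ j, 0 < θ i j → 0 < M i j * u j) :
    ∑ j, θ i j * log (M i j * u j / condProb θ i j) ≤ (∑ j, θ i j) * log ((M *ᵥ u) i) := by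
  rcases (sum_nonneg fun j _ => hθ j : 0 ≤ ∑ j, θ i j).eq_or_lt with hrow | hrow
  · have hzero := (sum_eq_zero_iff_of_nonneg fun j _ => hθ j).1 hrow.symm
    simp [hzero]
  have hθpos : ∀ j, 0 < condProb θ i j → 0 < θ i j := fun j h =>
    sum_mul_condProb hrow.ne' (j := j) ▸ mul_pos hrow h
  have hrewrite : ∑ j, θ i j * log (M i j * u j / condProb θ i j) =
      (∑ k, θ i k) * ∑ j, condProb θ i j * log (M i j * u j / condProb θ i j) := by
    simp_rw [mul_sum, ← mul_assoc, sum_mul_condProb hrow.ne']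
  rw [hrewrite]
  refine mul_le_mul_of_nonneg_left (sum_mul_log_le_log_of_sum_mul_le
    (condProb_nonneg hθ) (sum_condProb hrow.ne')
    (fun j h => div_pos (hpos j (hθpos j h)) h) (sum_le_sum fun j _ => ?_)) hrow.le
  rcases (condProb_nonneg hθ j).eq_or_lt with h | h
  · rw [← h, zero_mul]; exact hMu j
  · rw [mul_div_cancel₀ _ h.ne']

theorem condProb_pos_of_pos (hμ : ∀ j, 0 ≤ μ i j) (habs : ∀ j, μ i j = 0 → θ i j = 0)
    (h : 0 < θ i j) : 0 < condProb μ i j :=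
  condProb_pos hμ ((hμ j).lt_of_ne fun h₀ => h.ne' (habs j h₀.symm))

theorem marginal_pos_of_pos (hθ : ∀ i j, 0 ≤ θ i j)
    (hstat : ∀ k, ∑ j, θ k j = ∑ i, θ i k) (h : 0 < θ i j) : 0 < ∑ k, θ j k :=
  hstat j ▸ h.trans_le (single_le_sum (fun k _ => hθ k j) (mem_univ i))

end condProb

section tilt

variable {G μ θ : Fin d → Fin d → ℝ} {i j : Fin d}

theorem tilt_nonneg (hμ : ∀ j, 0 ≤ μ i j) (j : Fin d) : 0 ≤ tilt G μ i j :=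
  mul_nonneg (exp_pos _).le (condProb_nonneg hμ j)

theorem tilt_pos (hμ : ∀ j, 0 ≤ μ i j) (habs : ∀ j, μ i j = 0 → θ i j = 0)
    (h : 0 < θ i j) : 0 < tilt G μ i j :=
  mul_pos (exp_pos _) (condProb_pos_of_pos hμ habs h)

theorem mul_log_tilt_mul_div_condProb (hμ : ∀ j, 0 ≤ μ i j) (hθ : ∀ j, 0 ≤ θ i j)
    (habs : ∀ j, μ i j = 0 → θ i j = 0) {u : Fin d → ℝ} (hu : 0 < θ i j → 0 < u j) :
    θ i j * log (tilt G μ i j * u j / condProb θ i j) =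
      G i j * θ i j + θ i j * log (u j) -
        if 0 < θ i j then θ i j * log (condProb θ i j / condProb μ i j) else 0 := by
  by_cases h : 0 < θ i j
  · have hμij := condProb_pos_of_pos hμ habs h
    have hθij := condProb_pos hθ h
    rw [if_pos h, log_div (mul_pos (tilt_pos hμ habs h) (hu h)).ne' hθij.ne',
      log_mul (tilt_pos hμ habs h).ne' (hu h).ne', tilt, Matrix.of_apply,
      log_mul (exp_pos _).ne' hμij.ne', log_exp, log_div hθij.ne' hμij.ne']
    ring
  · simp [le_antisymm (not_lt.1 h) (hθ j)]

theorem sum_marginal_mul_log_add_le_tilt_mulVec (hμ : ∀ i j, 0 ≤ μ i j) (hθ : ∀ i j, 0 ≤ θ i j)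
    (hstat : ∀ k, ∑ j, θ k j = ∑ i, θ i k) (habs : ∀ i j, μ i j = 0 → θ i j = 0)
    {u : Fin d → ℝ} (hu₀ : ∀ j, 0 ≤ u j)
    (hu : ∀ j, 0 < ∑ k, θ j k → 0 < u j) :
    ∑ i, (∑ j, θ i j) * log (u i) + (∑ i, ∑ j, G i j * θ i j - relEntropyRate θ μ) ≤
      ∑ i, (∑ j, θ i j) * log ((tilt G μ *ᵥ u) i) := by
  have hu' : ∀ i j, 0 < θ i j → 0 < u j := fun i j h =>
    hu j (marginal_pos_of_pos hθ hstat h)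
  have hstat_log : ∑ i, ∑ j, θ i j * log (u j) = ∑ i, (∑ j, θ i j) * log (u i) := by
    rw [sum_comm]
    simp_rw [← sum_mul, ← hstat]
  calc _ = ∑ i, ∑ j, θ i j * log (tilt G μ i j * u j / condProb θ i j) := by
        simp_rw [mul_log_tilt_mul_div_condProb (hμ _) (hθ _) (habs _) (hu' _ _),
          sum_sub_distrib, sum_add_distrib, hstat_log, relEntropyRate, sum_filter]
        ring
    _ ≤ _ := sum_le_sum fun i _ => sum_mul_log_div_condProb_le (hθ i)
        (fun j => mul_nonneg (tilt_nonneg (hμ i) j) (hu₀ j))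
        (fun j h => mul_pos (tilt_pos (hμ i) (habs i) h) (hu' i j h))

theorem tilt_pow_mulVec_one_nonneg (hμ : ∀ i j, 0 ≤ μ i j) (n : ℕ) (i : Fin d) :
    0 ≤ (tilt G μ ^ n *ᵥ 1) i := by
  induction n generalizing i with
  | zero => simp
  | succ n ih =>
    rw [pow_succ', ← Matrix.mulVec_mulVec]
    exact sum_nonneg (s := univ) fun j _ => mul_nonneg (tilt_nonneg (hμ i) j) (ih j)

theorem tilt_pow_mulVec_one_pos (hμ : ∀ i j, 0 ≤ μ i j) (hθ : ∀ i j, 0 ≤ θ i j)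
    (hstat : ∀ k, ∑ j, θ k j = ∑ i, θ i k) (habs : ∀ i j, μ i j = 0 → θ i j = 0) (n : ℕ)
    {i : Fin d} (hi : 0 < ∑ k, θ i k) : 0 < (tilt G μ ^ n *ᵥ 1) i := by
  induction n generalizing i with
  | zero => simp
  | succ n ih =>
    rw [pow_succ', ← Matrix.mulVec_mulVec]
    obtain ⟨j, -, hj⟩ :=
      exists_lt_of_sum_lt (by simpa using hi : ∑ _ : Fin d, (0 : ℝ) < ∑ k, θ i k)
    exact sum_pos'
      (fun k _ => mul_nonneg (tilt_nonneg (hμ i) k) (tilt_pow_mulVec_one_nonneg hμ n k))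
      ⟨j, mem_univ j, mul_pos (tilt_pos (hμ i) (habs i) hj)
        (ih (marginal_pos_of_pos hθ hstat hj))⟩

theorem nat_mul_le_sum_marginal_mul_log_tilt_pow_mulVec_one (hμ : ∀ i j, 0 ≤ μ i j)
    (hθ : ∀ i j, 0 ≤ θ i j) (hstat : ∀ k, ∑ j, θ k j = ∑ i, θ i k)
    (habs : ∀ i j, μ i j = 0 → θ i j = 0) (n : ℕ) :
    n * (∑ i, ∑ j, G i j * θ i j - relEntropyRate θ μ) ≤
      ∑ i, (∑ j, θ i j) * log ((tilt G μ ^ n *ᵥ 1) i) := by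
  induction n with
  | zero => simp
  | succ n ih =>
    rw [pow_succ', ← Matrix.mulVec_mulVec, Nat.cast_succ, add_one_mul]
    exact (add_le_add ih le_rfl).trans <|
      sum_marginal_mul_log_add_le_tilt_mulVec hμ hθ hstat habs
        (tilt_pow_mulVec_one_nonneg hμ n) fun _ => tilt_pow_mulVec_one_pos hμ hθ hstat habs n

end tilt

theorem varadhan_lower_bound_general {d : ℕ} (μ θ : Fin d → Fin d → ℝ)
    (G : Fin d → Fin d → ℝ)
    (hμ0 : ∀ i j, 0 ≤ μ i j)
    (hθ0 : ∀ i j, 0 ≤ θ i j) (hθ1 : ∑ i, ∑ j, θ i j = 1)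
    (hθstat : ∀ k, ∑ j, θ k j = ∑ i, θ i k)
    (habs : ∀ i j, μ i j = 0 → θ i j = 0)
    (ρ : ℝ)
    (hρ : Filter.Tendsto
      (fun n : ℕ => (1 / (n : ℝ)) *
        Real.log (∑ i, ∑ j,
          ((Matrix.of fun i j => Real.exp (G i j) * condProb μ i j) ^ n) i j))
      Filter.atTop (nhds ρ)) :
    ρ ≥ ∑ i, ∑ j, G i j * θ i j -
      ∑ i, ∑ j ∈ Finset.univ.filter (fun j => 0 < θ i j),
        θ i j * Real.log (condProb θ i j / condProb μ i j) := by
  refine le_of_tendsto_one_div_mul_of_nat_mul_le hρ fun n => ?_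
  calc _ ≤ ∑ i, (∑ j, θ i j) * log ((tilt G μ ^ n *ᵥ 1) i) :=
        nat_mul_le_sum_marginal_mul_log_tilt_pow_mulVec_one hμ0 hθ0 hθstat habs n
    _ ≤ log (∑ i, (tilt G μ ^ n *ᵥ 1) i) :=
        sum_mul_log_le_log_sum (fun i => sum_nonneg fun j _ => hθ0 i j) hθ1
          (tilt_pow_mulVec_one_nonneg hμ0 n) fun _ =>
            tilt_pow_mulVec_one_pos hμ0 hθ0 hθstat habs n
    _ = _ := by simp [Matrix.mulVec, dotProduct, tilt]

/-- Varadhan's spectral radius characterization, lower-bound half (finite Markov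
case): the growth rate ρ of [e^{G(i,j)} μ(j|i)] satisfies
ρ ≥ ∑ G(i,j) θ(i,j) - D̄(θ‖μ) for every stationary Markov θ ⪯ μ. -/
theorem varadhan_lower_bound {d : ℕ} (μ θ : Fin d → Fin d → ℝ)
    (G : Fin d → Fin d → ℝ)
    (hμ0 : ∀ i j, 0 ≤ μ i j) (hμ1 : ∑ i, ∑ j, μ i j = 1)
    (hμstat : ∀ k, ∑ j, μ k j = ∑ i, μ i k)
    (hθ0 : ∀ i j, 0 ≤ θ i j) (hθ1 : ∑ i, ∑ j, θ i j = 1)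
    (hθstat : ∀ k, ∑ j, θ k j = ∑ i, θ i k)
    (habs : ∀ i j, μ i j = 0 → θ i j = 0)
    (ρ : ℝ)
    (hρ : Filter.Tendsto
      (fun n : ℕ => (1 / (n : ℝ)) *
        Real.log (∑ i, ∑ j,
          ((Matrix.of fun i j => Real.exp (G i j) * condProb μ i j) ^ n) i j))
      Filter.atTop (nhds ρ)) :
    ρ ≥ ∑ i, ∑ j, G i j * θ i j -
      ∑ i, ∑ j ∈ Finset.univ.filter (fun j => 0 < θ i j),
        θ i j * Real.log (condProb θ i j / condProb μ i j) :=
  varadhan_lower_bound_general μ θ G hμ0 hθ0 hθ1 hθstat habs ρ hρ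
end
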